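/- arXiv:math/9809089 — 6 statements merged into one kernel-verified Lean document; each statement's English description precedes it below -/
import Mathlib

section
/- Let (G_i, u_i)_{i∈ℕ} be a sequence of partially ordered abelian groups with distinguished elements u_i ≥ 0, and suppose there is ℓ ∈ ℕ such that for every i and every x ∈ G_i, if n·x ≥ 0 for some integer n > 0 then x + ℓ·u_i ≥ 0. Let P = ∏_i G_i and let P_b = { (g_i) ∈ P : ∃ M ∈ ℕ, ∀ i, −M·u_i ≤ g_i ≤ M·u_i } be the subgroup of bounded sequences. Then P_b is strongly pure in P in the following sense: if x ∈ P_b, m is a nonzero integer, and y ∈ P satisfies x = m·y, then y ∈ P_b. -/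
/-- Under a uniform perforation bound, the subgroup of bounded sequences is strongly
pure in the product of partially ordered abelian groups. -/
theorem bounded_strongly_pure (G : ℕ → Type*) [∀ i, AddCommGroup (G i)]
    [∀ i, PartialOrder (G i)]
    [∀ i, CovariantClass (G i) (G i) (· + ·) (· ≤ ·)]
    (u : ∀ i, G i) (hu : ∀ i, 0 ≤ u i) (ℓ : ℕ)
    (hperf : ∀ i (x : G i) (n : ℤ), 0 < n → 0 ≤ n • x → 0 ≤ x + (ℓ : ℤ) • u i)
    (x : ∀ i, G i) (hx : ∃ M : ℕ, ∀ i, -((M : ℤ) • u i) ≤ x i ∧ x i ≤ (M : ℤ) • u i)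
    (m : ℤ) (hm : m ≠ 0) (y : ∀ i, G i) (hxy : x = m • y) :
    ∃ M : ℕ, ∀ i, -((M : ℤ) • u i) ≤ y i ∧ y i ≤ (M : ℤ) • u i := by
  obtain ⟨M, hM⟩ := hx
  refine ⟨M + ℓ, fun i => ?_⟩
  letI : IsOrderedAddMonoid (G i) :=
    { add_le_add_left := fun a b h c => by
        rw [add_comm a c, add_comm b c]; exact CovariantClass.elim c h }
  set n : ℤ := |m| with hn
  have hn0 : 0 < n := abs_pos.mpr hm
  have hxb := hM i
  rw [hxy, Pi.smul_apply] at hxb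
  have hny : -((M:ℤ) • u i) ≤ n • y i ∧ n • y i ≤ (M:ℤ) • u i := by
    rcases abs_choice m with h | h
    · rw [hn, h]; exact hxb
    · rw [hn, h, neg_smul]
      exact ⟨by simpa using neg_le_neg hxb.2, by simpa using neg_le_neg hxb.1⟩
  have hMle : (M:ℤ) • u i ≤ n • ((M:ℤ) • u i) := by
    have hMu : 0 ≤ (M:ℤ) • u i := zsmul_nonneg (hu i) (Int.natCast_nonneg M)
    have : 0 ≤ (n - 1) • ((M:ℤ) • u i) := zsmul_nonneg hMu (by omega)
    rw [sub_smul, one_smul] at this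
    exact le_of_sub_nonneg this
  have hcast : ((M + ℓ : ℕ) : ℤ) • u i = (M:ℤ) • u i + (ℓ:ℤ) • u i := by
    rw [← add_smul]; norm_num
  constructor
  · -- lower bound
    have h1 : 0 ≤ n • (y i + (M:ℤ) • u i) := by
      rw [smul_add]
      have : -((M:ℤ) • u i) + (M:ℤ) • u i ≤ n • y i + n • ((M:ℤ) • u i) :=
        add_le_add hny.1 hMle
      simpa using this
    have h2 := hperf i (y i + (M:ℤ) • u i) n hn0 h1
    rw [hcast, ← sub_nonneg, sub_neg_eq_add]
    rwa [add_assoc] at h2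
  · -- upper bound
    have h1 : 0 ≤ n • ((M:ℤ) • u i - y i) := by
      rw [smul_sub, sub_nonneg]
      exact le_trans hny.2 hMle
    have h2 := hperf i ((M:ℤ) • u i - y i) n hn0 h1
    rw [hcast, ← sub_nonneg]
    rwa [sub_add_eq_add_sub] at h2
end

section
/- Let X be an abelian group and H a subgroup with the property that whenever x ∈ H, m is a nonzero integer, and y ∈ X satisfy x = m·y, then y ∈ H. If the subgroup ⋂_{n≥1} nX is divisible, then ⋂_{n≥1} nH = H ∩ ⋂_{n≥1} nX, and this group is divisible. -/
/-- If `H` is strongly pure in `X` and `⋂ₙ nX` is divisible, then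
`⋂ₙ nH = H ∩ ⋂ₙ nX` and this group is divisible. -/
theorem strongly_pure_first_ulm {X : Type*} [AddCommGroup X] (H : AddSubgroup X)
    (hstrong : ∀ x ∈ H, ∀ m : ℤ, m ≠ 0 → ∀ y : X, x = m • y → y ∈ H)
    (hdiv : ∀ x : X, (∀ n : ℕ, 1 ≤ n → ∃ y : X, x = n • y) →
      ∀ m : ℕ, 0 < m →
        ∃ y : X, (∀ n : ℕ, 1 ≤ n → ∃ z : X, y = n • z) ∧ m • y = x) :
    (∀ x : X, (∀ n : ℕ, 1 ≤ n → ∃ h ∈ H, x = n • h) ↔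
      (x ∈ H ∧ ∀ n : ℕ, 1 ≤ n → ∃ y : X, x = n • y)) ∧
    (∀ x : X, (∀ n : ℕ, 1 ≤ n → ∃ h ∈ H, x = n • h) →
      ∀ m : ℕ, 0 < m →
        ∃ y : X, (∀ n : ℕ, 1 ≤ n → ∃ h ∈ H, y = n • h) ∧ m • y = x) := by
  have key : ∀ x : X, x ∈ H → (∀ n : ℕ, 1 ≤ n → ∃ y : X, x = n • y) →
      ∀ n : ℕ, 1 ≤ n → ∃ h ∈ H, x = n • h := by
    intro x hx hdivx n hn
    obtain ⟨y, hy⟩ := hdivx n hn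
    have hn0 : (n : ℤ) ≠ 0 := by exact_mod_cast (Nat.one_le_iff_ne_zero.mp hn)
    exact ⟨y, hstrong x hx n hn0 y (by simpa using hy), hy⟩
  have memH : ∀ x : X, (∀ n : ℕ, 1 ≤ n → ∃ h ∈ H, x = n • h) → x ∈ H := by
    intro x hx
    obtain ⟨h1, hh1, hh1'⟩ := hx 1 le_rfl
    have : x = h1 := by simpa using hh1'
    exact this ▸ hh1
  constructor
  · intro x
    constructor
    · intro h
      refine ⟨memH x h, fun n hn => ?_⟩
      obtain ⟨hh, hhH, hhx⟩ := h n hn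
      exact ⟨hh, hhx⟩
    · rintro ⟨hx, hdivx⟩
      exact key x hx hdivx
  · intro x hx m hm
    have hxH : x ∈ H := memH x hx
    have hxD : ∀ n : ℕ, 1 ≤ n → ∃ y : X, x = n • y := fun n hn =>
      (hx n hn).elim fun h hh => ⟨h, hh.2⟩
    obtain ⟨y, hyD, hyx⟩ := hdiv x hxD m hm
    have hm0 : (m : ℤ) ≠ 0 := by exact_mod_cast hm.ne'
    have hyH : y ∈ H := hstrong x hxH m hm0 y (by rw [← hyx]; simp)
    exact ⟨y, key y hyH hyD, hyx⟩
end

section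
/- Let (G_i, u_i)_{i∈ℕ} be a sequence of partially ordered abelian groups with distinguished elements u_i, and suppose there is ℓ ∈ ℕ such that for every i, every x ∈ G_i, and every nonzero integer n, there exists y ∈ G_i with −ℓ·u_i ≤ y ≤ ℓ·u_i and x − y ∈ n·G_i. Then for any x = (x_i) ∈ ∏_i G_i there exists y = (y_i) ∈ ∏_i G_i with −ℓ·u_i ≤ y_i ≤ ℓ·u_i for all i and x_i − y_i ∈ (i!)·G_i for all i ≥ 1; consequently, in the quotient X = (∏ G_i)/(⊕ G_i), the class of x − y lies in ⋂_{n≥1} nX. -/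
/-- The subgroup of finitely supported sequences in a product of abelian groups. -/
def finSupp (G : ℕ → Type*) [∀ i, AddCommGroup (G i)] : AddSubgroup (∀ i, G i) where
  carrier := {x | ∃ N, ∀ i, N ≤ i → x i = 0}
  zero_mem' := ⟨0, fun i _ => rfl⟩
  add_mem' := by
    rintro a b ⟨N, hN⟩ ⟨M, hM⟩
    refine ⟨max N M, fun i hi => ?_⟩
    have h1 := hN i (le_trans (le_max_left _ _) hi)
    have h2 := hM i (le_trans (le_max_right _ _) hi)
    simp [Pi.add_apply, h1, h2]
  neg_mem' := by
    rintro a ⟨N, hN⟩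
    exact ⟨N, fun i hi => by simp [hN i hi]⟩

/-- Under a uniform bound `ℓ` on the approximation of elements modulo `n·G_i` by
elements bounded by `ℓ·u_i`, any element of the product admits a bounded
perturbation `y` with `x_i − y_i ∈ (i!)·G_i`, so the class of `x − y` in the
quotient by the direct sum is infinitely divisible. -/
theorem bounded_perturbation_infinite_height (G : ℕ → Type*) [∀ i, AddCommGroup (G i)]
    [∀ i, PartialOrder (G i)]
    [∀ i, CovariantClass (G i) (G i) (· + ·) (· ≤ ·)]
    (u : ∀ i, G i) (ℓ : ℕ)
    (hipo : ∀ i (x : G i) (n : ℤ), n ≠ 0 →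
      ∃ y : G i, -((ℓ : ℤ) • u i) ≤ y ∧ y ≤ (ℓ : ℤ) • u i ∧ ∃ z : G i, x - y = n • z)
    (x : ∀ i, G i) :
    ∃ y : ∀ i, G i,
      (∀ i, -((ℓ : ℤ) • u i) ≤ y i ∧ y i ≤ (ℓ : ℤ) • u i) ∧
      (∀ i, 1 ≤ i → ∃ z : G i, x i - y i = ((Nat.factorial i : ℤ)) • z) ∧
      (∀ n : ℕ, 1 ≤ n → ∃ w : (∀ i, G i) ⧸ finSupp G,
        QuotientAddGroup.mk' (finSupp G) (x - y) = n • w) := by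
  have hfac : ∀ i : ℕ, ((Nat.factorial i : ℤ)) ≠ 0 := fun i => by
    exact_mod_cast (Nat.factorial_pos i).ne'
  choose y hy1 hy2 z hz using fun i => hipo i (x i) (Nat.factorial i) (hfac i)
  refine ⟨y, fun i => ⟨hy1 i, hy2 i⟩, fun i _ => ⟨z i, hz i⟩, fun n hn => ?_⟩
  have hdvd : ∀ i : ℕ, n ≤ i → (n : ℤ) ∣ (Nat.factorial i : ℤ) := fun i hi =>
    Int.natCast_dvd_natCast.mpr (Nat.dvd_factorial hn hi)
  choose k hk using hdvd
  refine ⟨QuotientAddGroup.mk' (finSupp G)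
    (fun i => if h : n ≤ i then k i h • z i else 0), ?_⟩
  rw [← map_nsmul, eq_comm, QuotientAddGroup.mk'_eq_mk']
  refine ⟨(x - y) - n • (fun i => if h : n ≤ i then k i h • z i else 0), ⟨n, fun i hi => ?_⟩, by abel⟩
  simp only [Pi.sub_apply, Pi.smul_apply, dif_pos hi]
  have : x i - y i = (n : ℤ) • (k i hi • z i) := by
    rw [hz i, hk i hi, mul_smul]
  rw [this, natCast_zsmul, sub_self]
end

section
/- Let (G_i)_{i∈ℕ} be a sequence of abelian groups and let X = (∏_i G_i)/(⊕_i G_i). Then X is complete in the ℤ-adic topology: every sequence (x_k) in X which is ℤ-adically Cauchy (i.e., for every n ≥ 1 there is N such that x_j − x_k ∈ nX for all j, k ≥ N) converges ℤ-adically to some x ∈ X (i.e., for every n ≥ 1 there is N such that x − x_k ∈ nX for all k ≥ N). -/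
/-- `X = (∏ G_i)/(⊕ G_i)` is complete in the ℤ-adic topology. -/
theorem prod_mod_sum_zadically_complete (G : ℕ → Type*) [∀ i, AddCommGroup (G i)] :
    ∀ x : ℕ → ((∀ i, G i) ⧸ finSupp G),
      (∀ n : ℕ, 1 ≤ n → ∃ N : ℕ, ∀ j k : ℕ, N ≤ j → N ≤ k →
        ∃ w : (∀ i, G i) ⧸ finSupp G, x j - x k = n • w) →
      ∃ l : (∀ i, G i) ⧸ finSupp G, ∀ n : ℕ, 1 ≤ n → ∃ N : ℕ, ∀ k : ℕ, N ≤ k →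
        ∃ w : (∀ i, G i) ⧸ finSupp G, l - x k = n • w := by
  classical
  intro x h
  set π : (∀ i, G i) →+ (∀ i, G i) ⧸ finSupp G := QuotientAddGroup.mk' (finSupp G) with hπdef
  choose N hN using fun n => h (Nat.factorial n) (Nat.one_le_iff_ne_zero.2 (Nat.factorial_ne_zero n))
  set M : ℕ → ℕ := fun n => Finset.sup (Finset.range (n + 1)) N with hMdef
  have hMN : ∀ n, N n ≤ M n := fun n => Finset.le_sup (Finset.self_mem_range_succ n)
  have hMmono : Monotone M := fun a b hab =>
    Finset.sup_mono (Finset.range_subset_range.2 (by omega))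
  set y : ℕ → ((∀ i, G i) ⧸ finSupp G) := fun n => x (M n) with hydef
  have hstep : ∀ n, ∃ c : ∀ i, G i, y (n + 1) - y n = π (Nat.factorial n • c) := by
    intro n
    obtain ⟨w, hw⟩ := hN n (M (n + 1)) (M n)
      (le_trans (hMN n) (hMmono (Nat.le_succ n))) (hMN n)
    obtain ⟨cc, hcc⟩ := QuotientAddGroup.mk'_surjective (finSupp G) w
    exact ⟨cc, by rw [hw, ← hcc, ← map_nsmul]⟩
  choose c hc using hstep
  obtain ⟨u0, hu0⟩ := QuotientAddGroup.mk'_surjective (finSupp G) (y 0)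
  set s : ℕ → ∀ i, G i := fun n => Nat.rec u0 (fun k sk => sk + Nat.factorial k • c k) n with hsdef
  have hsS : ∀ n, s (n + 1) = s n + Nat.factorial n • c n := fun n => rfl
  have hπs : ∀ n, π (s n) = y n := by
    intro n
    induction n with
    | zero => exact hu0
    | succ k ih =>
      rw [hsS, map_add, ih, ← hc k]
      abel
  have hss : ∀ n i, n ≤ i → s i - s n = ∑ k ∈ Finset.Ico n i, (Nat.factorial k • c k) := by
    intro n i hni
    induction i, hni using Nat.le_induction with
    | base => simp
    | succ m hm ih =>
      rw [Finset.sum_Ico_succ_top hm, ← ih, hsS]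
      abel
  set L : ∀ i, G i := fun i => s i i with hLdef
  set e : ℕ → ∀ i, G i := fun n i =>
    if n ≤ i then ∑ k ∈ Finset.Ico n i, (Nat.factorial k / Nat.factorial n) • c k i else 0 with hedef
  have key : ∀ n, L - s n - Nat.factorial n • e n ∈ finSupp G := by
    intro n
    refine ⟨n, fun i hi => ?_⟩
    have h1 : L i - s n i = ∑ k ∈ Finset.Ico n i, Nat.factorial k • c k i := by
      have := congrFun (hss n i hi) i
      simpa [hLdef] using this
    have h2 : (Nat.factorial n • e n i : G i) = ∑ k ∈ Finset.Ico n i, Nat.factorial k • c k i := by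
      rw [hedef]
      simp only [if_pos hi, Finset.smul_sum]
      refine Finset.sum_congr rfl fun k hk => ?_
      rw [smul_smul, Nat.mul_div_cancel'
        (Nat.factorial_dvd_factorial (Finset.mem_Ico.1 hk).1)]
    simp only [Pi.sub_apply, Pi.smul_apply]
    rw [h1, ← h2, sub_self]
  have hLy : ∀ n, π L - y n = Nat.factorial n • π (e n) := by
    intro n
    have h0 : π (L - s n - Nat.factorial n • e n) = 0 := (QuotientAddGroup.eq_zero_iff _).2 (key n)
    have : π L - π (s n) - Nat.factorial n • π (e n) = 0 := by
      simpa [map_sub, map_nsmul] using h0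
    rw [hπs n] at this
    linear_combination (norm := abel) this
  refine ⟨π L, fun n hn => ⟨M n, fun k hk => ?_⟩⟩
  obtain ⟨w1, hw1⟩ := hN n (M n) k (hMN n) (le_trans (hMN n) hk)
  obtain ⟨m, hm⟩ := Nat.dvd_factorial hn le_rfl
  refine ⟨m • (π (e n) + w1), ?_⟩
  have : π L - x k = Nat.factorial n • (π (e n) + w1) := by
    have := hLy n
    rw [hydef] at this
    have h3 : π L - x k = (π L - x (M n)) + (x (M n) - x k) := by abel
    rw [h3, this, hw1]; exact (smul_add (Nat.factorial n) (π (e n)) w1).symm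
  rw [this, hm, mul_smul]
end

section
/- Let (G_i, u_i)_{i∈ℕ} be partially ordered abelian groups with u_i ≥ 0, suppose there is ℓ such that each G_i satisfies: n·x ≥ 0 for some n > 0 implies x + ℓ·u_i ≥ 0. Let P = ∏ G_i with componentwise order, P_b the subgroup of bounded sequences { (g_i) : ∃M, ∀i, −M·u_i ≤ g_i ≤ M·u_i }, and S = ⊕ G_i the finitely supported sequences (note S ⊆ P_b). Then the image X_b = P_b/S is a pure subgroup of X = P/S: for every integer n, nX ∩ X_b = nX_b. -/
/-- The image in `(∏ G_i)/(⊕ G_i)` of the bounded sequences. -/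
def boundedClass (G : ℕ → Type*) [∀ i, AddCommGroup (G i)] [∀ i, PartialOrder (G i)]
    (u : ∀ i, G i) : Set ((∀ i, G i) ⧸ finSupp G) :=
  {ξ | ∃ g : ∀ i, G i, QuotientAddGroup.mk' (finSupp G) g = ξ ∧
    ∃ M : ℕ, ∀ i, -((M : ℤ) • u i) ≤ g i ∧ g i ≤ (M : ℤ) • u i}

section Aux

variable {A : Type*} [AddCommGroup A] [PartialOrder A]
  [CovariantClass A A (· + ·) (· ≤ ·)]

private def auxOrd (A : Type*) [AddCommGroup A] [PartialOrder A]
    [CovariantClass A A (· + ·) (· ≤ ·)] : IsOrderedAddMonoid A :=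
  { add_le_add_left := fun a b h c => by
      rw [add_comm a, add_comm b]; exact CovariantClass.elim c h }

private lemma aux_zsmul_le_zsmul_right {n : ℤ} (hn : 0 ≤ n) {a b : A} (h : a ≤ b) :
    n • a ≤ n • b := by
  letI := auxOrd A
  exact zsmul_le_zsmul_right hn h

private lemma aux_zsmul_le_zsmul_left {a : A} (ha : 0 ≤ a) {m n : ℤ} (h : m ≤ n) :
    m • a ≤ n • a := by
  letI := auxOrd A
  exact zsmul_le_zsmul_left ha h

private lemma aux_zsmul_nonneg {a : A} (ha : 0 ≤ a) {n : ℤ} (hn : 0 ≤ n) : 0 ≤ n • a := by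
  have := aux_zsmul_le_zsmul_left ha hn
  rwa [zero_zsmul] at this

private lemma aux_neg_le_neg {a b : A} (h : a ≤ b) : -b ≤ -a := by
  letI := auxOrd A
  exact neg_le_neg h

private lemma aux_add_le_add {a b c d : A} (h1 : a ≤ b) (h2 : c ≤ d) : a + c ≤ b + d := by
  letI := auxOrd A
  exact add_le_add h1 h2

/-- If `n • h` is `M`-bounded and `n ≠ 0`, then `h` is `(M + ℓ)`-bounded,
by the uniform perforation hypothesis. -/
private lemma aux_key (u : A) (hu : 0 ≤ u) (ℓ : ℕ)
    (hperf : ∀ (x : A) (n : ℤ), 0 < n → 0 ≤ n • x → 0 ≤ x + (ℓ : ℤ) • u)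
    {n : ℤ} (hn : 0 < n) {M : ℕ} {h : A}
    (hlo : -((M : ℤ) • u) ≤ n • h) (hhi : n • h ≤ (M : ℤ) • u) :
    -(((M + ℓ : ℕ) : ℤ) • u) ≤ h ∧ h ≤ ((M + ℓ : ℕ) : ℤ) • u := by
  set a : A := (M : ℤ) • u with ha
  set b : A := (ℓ : ℤ) • u with hb
  have hMu : (0 : A) ≤ a := aux_zsmul_nonneg hu (by positivity)
  have step1 : a ≤ n • a := by
    have := aux_zsmul_le_zsmul_left hMu (show (1:ℤ) ≤ n from hn)
    rwa [one_zsmul] at this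
  have hcast : ((M + ℓ : ℕ) : ℤ) • u = a + b := by
    rw [ha, hb, Nat.cast_add, add_zsmul]
  rw [hcast]
  constructor
  · -- lower bound
    have hs : (0 : A) ≤ n • (h + a) := by
      rw [zsmul_add]
      have := aux_add_le_add hlo step1
      rwa [neg_add_cancel] at this
    have hp := hperf (h + a) n hn hs
    calc -(a + b) = 0 + -(a + b) := (zero_add _).symm
      _ ≤ (h + a + b) + -(a + b) := add_le_add_left hp _
      _ = h := by abel
  · -- upper bound
    have hs : (0 : A) ≤ n • (a - h) := by
      rw [zsmul_sub]
      exact sub_nonneg.2 (hhi.trans step1)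
    have hp := hperf (a - h) n hn hs
    calc h = 0 + h := (zero_add _).symm
      _ ≤ (a - h + b) + h := add_le_add_left hp _
      _ = a + b := by abel

private lemma aux_key' (u : A) (hu : 0 ≤ u) (ℓ : ℕ)
    (hperf : ∀ (x : A) (n : ℤ), 0 < n → 0 ≤ n • x → 0 ≤ x + (ℓ : ℤ) • u)
    {n : ℤ} (hn : n ≠ 0) {M : ℕ} {h : A}
    (hlo : -((M : ℤ) • u) ≤ n • h) (hhi : n • h ≤ (M : ℤ) • u) :
    -(((M + ℓ : ℕ) : ℤ) • u) ≤ h ∧ h ≤ ((M + ℓ : ℕ) : ℤ) • u := by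
  rcases hn.lt_or_gt with hneg | hpos
  · have e : (-n) • (-h) = n • h := by rw [neg_zsmul, zsmul_neg, neg_neg]
    obtain ⟨l1, l2⟩ := aux_key u hu ℓ hperf (show (0:ℤ) < -n by omega)
      (M := M) (h := -h) (by rwa [e]) (by rwa [e])
    constructor
    · have := aux_neg_le_neg l2
      rwa [neg_neg] at this
    · have := aux_neg_le_neg l1
      rwa [neg_neg, neg_neg] at this
  · exact aux_key u hu ℓ hperf hpos hlo hhi

/-- `n • g` is `(|n| * M)`-bounded when `g` is `M`-bounded. -/
private lemma aux_smul_bound (u : A) (n : ℤ) (M : ℕ) {g : A}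
    (h1 : -((M : ℤ) • u) ≤ g) (h2 : g ≤ (M : ℤ) • u) :
    -(((n.natAbs * M : ℕ) : ℤ) • u) ≤ n • g ∧ n • g ≤ ((n.natAbs * M : ℕ) : ℤ) • u := by
  set a : A := (M : ℤ) • u with ha
  set m : ℤ := (n.natAbs : ℤ) with hm
  have hK : ((n.natAbs * M : ℕ) : ℤ) • u = m • a := by
    rw [ha, hm, Nat.cast_mul, mul_zsmul]
  have hm0 : (0 : ℤ) ≤ m := Int.natCast_nonneg _
  have hU : m • g ≤ m • a := aux_zsmul_le_zsmul_right hm0 h2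
  have hL : -(m • a) ≤ m • g := by
    have := aux_zsmul_le_zsmul_right hm0 h1
    rwa [zsmul_neg] at this
  rw [hK]
  rcases le_or_gt 0 n with hn | hn
  · have : n = m := by omega
    rw [this]
    exact ⟨hL, hU⟩
  · have : n = -m := by omega
    rw [this, neg_zsmul]
    refine ⟨aux_neg_le_neg hU, ?_⟩
    have := aux_neg_le_neg hL
    rwa [neg_neg] at this

end Aux

/-- Under a uniform perforation bound, the image `X_b` of the bounded sequences is a
pure subgroup of `X = (∏ G_i)/(⊕ G_i)`: for every integer `n`, `nX ∩ X_b = nX_b`. -/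
theorem boundedClass_pure (G : ℕ → Type*) [∀ i, AddCommGroup (G i)]
    [∀ i, PartialOrder (G i)]
    [∀ i, CovariantClass (G i) (G i) (· + ·) (· ≤ ·)]
    (u : ∀ i, G i) (hu : ∀ i, 0 ≤ u i) (ℓ : ℕ)
    (hperf : ∀ i (x : G i) (n : ℤ), 0 < n → 0 ≤ n • x → 0 ≤ x + (ℓ : ℤ) • u i) :
    ∀ n : ℤ,
      {ξ : (∀ i, G i) ⧸ finSupp G |
          (∃ η, ξ = n • η) ∧ ξ ∈ boundedClass G u} =
      {ξ : (∀ i, G i) ⧸ finSupp G |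
          ∃ η ∈ boundedClass G u, ξ = n • η} := by
  intro n
  ext ξ
  simp only [Set.mem_setOf_eq]
  constructor
  · rintro ⟨⟨η, rfl⟩, hξb⟩
    rcases eq_or_ne n 0 with rfl | hn
    · exact ⟨0, ⟨0, by simp, 0, fun i => by simp⟩, by simp⟩
    obtain ⟨g, hg, M, hM⟩ := hξb
    obtain ⟨h, rfl⟩ := QuotientAddGroup.mk'_surjective (finSupp G) η
    have hmem : n • h - g ∈ finSupp G := by
      have : (QuotientAddGroup.mk' (finSupp G)) (n • h - g) = 0 := by
        rw [map_sub, map_zsmul, hg, sub_self]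
      exact (QuotientAddGroup.eq_zero_iff _).mp this
    obtain ⟨N, hN⟩ := hmem
    set h' : ∀ i, G i := fun i => if N ≤ i then h i else 0 with hh'
    have hquot : QuotientAddGroup.mk' (finSupp G) h' = QuotientAddGroup.mk' (finSupp G) h := by
      rw [QuotientAddGroup.mk'_eq_mk']
      exact ⟨-h' + h, ⟨N, fun i hi => by simp [hh', if_pos hi]⟩, by abel⟩
    refine ⟨QuotientAddGroup.mk' (finSupp G) h, ⟨h', hquot, M + ℓ, fun i => ?_⟩, rfl⟩
    by_cases hi : N ≤ i
    · have heq : n • h i = g i := by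
        have := hN i hi
        simp only [Pi.sub_apply, Pi.smul_apply] at this
        exact sub_eq_zero.mp this
      have := aux_key' (u i) (hu i) ℓ (hperf i) hn
        (heq ▸ (hM i).1) (heq ▸ (hM i).2)
      simpa [hh', if_pos hi] using this
    · have h0 : (0 : G i) ≤ ((M + ℓ : ℕ) : ℤ) • u i := aux_zsmul_nonneg (hu i) (by positivity)
      have hne : h' i = 0 := by simp [hh', if_neg hi]
      rw [hne]
      refine ⟨?_, h0⟩
      have := aux_neg_le_neg h0
      rwa [neg_zero] at this
  · rintro ⟨η, ⟨g, hg, M, hM⟩, rfl⟩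
    refine ⟨⟨η, rfl⟩, n • g, by rw [map_zsmul, hg], n.natAbs * M, fun i => ?_⟩
    have := aux_smul_bound (u i) n M (hM i).1 (hM i).2
    simpa using this
end

section
/- Let X be an abelian group and H a subgroup such that (a) H is pure in X, (b) for every x ∈ X there exists y ∈ H with x − y ∈ ⋂_{n≥1} nX, and (c) X is complete in the ℤ-adic topology (every ℤ-adically Cauchy sequence in X converges ℤ-adically in X). Then H is complete in its own ℤ-adic topology: every sequence (h_k) in H with the property that for each n there is N with h_j − h_k ∈ nH for j,k ≥ N, converges to some h ∈ H in the sense that for each n there is N with h − h_k ∈ nH for k ≥ N. -/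
/-- A pure subgroup `H` of a ℤ-adically complete group `X` which is dense in the sense
that every `x ∈ X` differs from an element of `H` by an element of `⋂ₙ nX`
is itself ℤ-adically complete. -/
theorem pure_dense_subgroup_complete {X : Type*} [AddCommGroup X] (H : AddSubgroup X)
    (hpure : ∀ (n : ℤ), ∀ h ∈ H, (∃ x : X, h = n • x) → ∃ h' ∈ H, h = n • h')
    (happrox : ∀ x : X, ∃ y ∈ H, ∀ n : ℕ, 1 ≤ n → ∃ z : X, x - y = n • z)
    (hcomplete : ∀ x : ℕ → X,
      (∀ n : ℕ, 1 ≤ n → ∃ N : ℕ, ∀ j k : ℕ, N ≤ j → N ≤ k → ∃ w : X, x j - x k = n • w) →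
      ∃ l : X, ∀ n : ℕ, 1 ≤ n → ∃ N : ℕ, ∀ k : ℕ, N ≤ k → ∃ w : X, l - x k = n • w) :
    ∀ h : ℕ → X, (∀ k, h k ∈ H) →
      (∀ n : ℕ, 1 ≤ n → ∃ N : ℕ, ∀ j k : ℕ, N ≤ j → N ≤ k →
        ∃ w ∈ H, h j - h k = n • w) →
      ∃ l ∈ H, ∀ n : ℕ, 1 ≤ n → ∃ N : ℕ, ∀ k : ℕ, N ≤ k →
        ∃ w ∈ H, l - h k = n • w := by
  intro h hmem hcauchy
  -- h is Cauchy in X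
  obtain ⟨x, hx⟩ := hcomplete h (by
    intro n hn
    obtain ⟨N, hN⟩ := hcauchy n hn
    exact ⟨N, fun j k hj hk => (hN j k hj hk).imp fun w hw => hw.2⟩)
  obtain ⟨y, hyH, hy⟩ := happrox x
  refine ⟨y, hyH, fun n hn => ?_⟩
  obtain ⟨N, hN⟩ := hx n hn
  refine ⟨N, fun k hk => ?_⟩
  obtain ⟨w, hw⟩ := hN k hk
  obtain ⟨z, hz⟩ := hy n hn
  have hmemH : y - h k ∈ H := sub_mem hyH (hmem k)
  have heq : y - h k = (n : ℤ) • (w - z) := by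
    have : y - h k = (x - h k) - (x - y) := by abel
    rw [this, hw, hz]; simp [smul_sub]
  obtain ⟨h', hh'H, hh'⟩ := hpure (n : ℤ) (y - h k) hmemH ⟨w - z, heq⟩
  exact ⟨h', hh'H, by rw [hh', natCast_zsmul]⟩
end
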